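/- arXiv:math/9911268 — 4 statements merged into one kernel-verified Lean document; each statement's English description precedes it below -/
import Mathlib

section
/- Every connected brace on at least five vertices is 3-connected. -/
open SimpleGraph

universe u v

variable {V : Type u} {W : Type v}

/-- `(A, B)` is a bipartition of the simple graph `G`. -/
def IsBipartition (G : SimpleGraph V) (A B : Set V) : Prop :=
  Disjoint A B ∧ A ∪ B = Set.univ ∧
    ∀ ⦃u v⦄, G.Adj u v → ((u ∈ A ∧ v ∈ B) ∨ (u ∈ B ∧ v ∈ A))

/-- `G` is `k`-extendable: every matching with at most `k` edges extends
to a perfect matching. -/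
def KExtendable (G : SimpleGraph V) (k : ℕ) : Prop :=
  ∀ M : G.Subgraph, M.IsMatching → M.edgeSet.ncard ≤ k →
    ∃ P : G.Subgraph, M ≤ P ∧ P.IsPerfectMatching

/-- A brace is a `2`-extendable bipartite graph. -/
def IsBrace (G : SimpleGraph V) : Prop :=
  (∃ A B, IsBipartition G A B) ∧ KExtendable G 2

/-- `G` has a matching whose vertex set is exactly `S`
(i.e. the subgraph of `G` induced on `S` has a perfect matching). -/
def HasPMOn (G : SimpleGraph V) (S : Set V) : Prop :=
  ∃ M : G.Subgraph, M.IsMatching ∧ M.verts = S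

/-- An orientation of a simple graph: each edge gets exactly one direction. -/
structure GraphOrientation (G : SimpleGraph V) where
  dir : V → V → Prop
  asymm : ∀ u v, dir u v → ¬ dir v u
  adj_iff : ∀ u v, G.Adj u v ↔ (dir u v ∨ dir v u)

open scoped Classical in
/-- The number of edges of the walk `w` traversed in agreement with the
orientation `o`. -/
noncomputable def forwardCount {G : SimpleGraph V} (o : GraphOrientation G) {u v : V}
    (w : G.Walk u v) : ℕ :=
  w.darts.countP fun d => decide (o.dir d.fst d.snd)

/-- `o` is a Pfaffian orientation of `G`: every central even circuit is oddly
oriented.  (For an even circuit, being oddly oriented with respect to one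
traversal direction is equivalent to being oddly oriented with respect to the
other.) -/
def IsPfaffian (G : SimpleGraph V) (o : GraphOrientation G) : Prop :=
  ∀ (v : V) (c : G.Walk v v), c.IsCycle → Even c.length →
    HasPMOn G {x | x ∉ c.support} → Odd (forwardCount o c)

/-- The neighborhood of a vertex set: vertices outside `X` adjacent to `X`. -/
def nbdSet (G : SimpleGraph V) (X : Set V) : Set V :=
  {v | v ∉ X ∧ ∃ x ∈ X, G.Adj x v}

/-- Restriction of `G` to the vertex set `T`, kept on the same vertex type. -/
def restrictG (G : SimpleGraph V) (T : Set V) : SimpleGraph V where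
  Adj x y := G.Adj x y ∧ x ∈ T ∧ y ∈ T
  symm := ⟨fun x y ⟨h, hx, hy⟩ => ⟨h.symm, hy, hx⟩⟩
  loopless := ⟨fun x ⟨h, _, _⟩ => G.loopless.irrefl x h⟩

/-- Every edge of `G` is contained in a matching with vertex set exactly `S`.
(When the edges of `G` lie within `S`, this says that the graph on `S` is
1-extendable.) -/
def OneExtendableOn (G : SimpleGraph V) (S : Set V) : Prop :=
  ∀ ⦃x y⦄, G.Adj x y → ∃ M : G.Subgraph, M.IsMatching ∧ M.verts = S ∧ M.Adj x y

/-- `G` is 1-extendable: every edge lies in a perfect matching. -/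
def OneExtendable (G : SimpleGraph V) : Prop :=
  OneExtendableOn G Set.univ

/-- `G` is `k`-connected: more than `k` vertices, and deleting fewer than
`k` vertices leaves a connected graph. -/
def KConnected (G : SimpleGraph V) [Fintype V] (k : ℕ) : Prop :=
  k < Fintype.card V ∧ ∀ S : Set V, S.ncard < k → (G.induce (Sᶜ : Set V)).Connected

/-- A walk is `M`-alternating if its edges alternately belong and do not
belong to `M`. -/
def IsAltWalk {G : SimpleGraph V} (M : G.Subgraph) {u v : V} (w : G.Walk u v) : Prop :=
  (∀ (i : ℕ) (h : i < w.edges.length), (w.edges.get ⟨i, h⟩ ∈ M.edgeSet ↔ Even i)) ∨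
  (∀ (i : ℕ) (h : i < w.edges.length), (w.edges.get ⟨i, h⟩ ∈ M.edgeSet ↔ Odd i))

/-- A path is `M`-alternating if every internal vertex (vertex of degree two
in the path) is incident with an edge of `M` lying on the path. -/
def IsMAltPath {G : SimpleGraph V} (M : G.Subgraph) {a b : V} (p : G.Walk a b) : Prop :=
  p.IsPath ∧ ∀ x ∈ p.support, x ≠ a → x ≠ b → ∃ y, M.Adj x y ∧ s(x, y) ∈ p.edges

/-- An `H`-path: a path with at least one edge, both ends in `H`, and
otherwise disjoint from `H`. -/
def IsHPath {G : SimpleGraph V} (H : G.Subgraph) {a b : V} (p : G.Walk a b) : Prop :=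
  0 < p.length ∧ a ∈ H.verts ∧ b ∈ H.verts ∧
  (∀ x ∈ p.support, x ≠ a → x ≠ b → x ∉ H.verts) ∧
  ∀ e ∈ p.edges, e ∉ H.edgeSet

/-- Neighborhood of a vertex set inside a subgraph `H`. -/
def nbdSetSub {G : SimpleGraph V} (H : G.Subgraph) (X : Set V) : Set V :=
  {v | v ∉ X ∧ ∃ x ∈ X, H.Adj x v}

/-- `M` is a perfect matching of the subgraph `H`. -/
def SubgraphPM {G₀ : SimpleGraph V} (H M : G₀.Subgraph) : Prop :=
  M ≤ H ∧ M.IsMatching ∧ M.verts = H.verts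

/-- `G` is a 4-sum of the subgraphs `G₁, G₂` of `G₀` along the central
circuit `C` with vertices `a, b, c, d` (in order):
`G₁ ∪ G₂ = G₀`, `G₁ ∩ G₂ = C`, each `Gᵢ` has a vertex not in the other, and
`G` is obtained from `G₀` by deleting some (possibly no) edges of `C`. -/
def IsFourSum (G G₀ : SimpleGraph V) (G₁ G₂ : G₀.Subgraph) (a b c d : V) : Prop :=
  ([a, b, c, d] : List V).Nodup ∧
  G₀.Adj a b ∧ G₀.Adj b c ∧ G₀.Adj c d ∧ G₀.Adj d a ∧
  HasPMOn G₀ (({a, b, c, d} : Set V)ᶜ) ∧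
  G₁ ⊔ G₂ = (⊤ : G₀.Subgraph) ∧
  (G₁ ⊓ G₂).verts = ({a, b, c, d} : Set V) ∧
  (∀ x y, (G₁ ⊓ G₂).Adj x y ↔
      s(x, y) ∈ ({s(a, b), s(b, c), s(c, d), s(d, a)} : Set (Sym2 V))) ∧
  (G₁.verts \ G₂.verts).Nonempty ∧ (G₂.verts \ G₁.verts).Nonempty ∧
  (∀ x y, G.Adj x y → G₀.Adj x y) ∧
  (∀ x y, G₀.Adj x y →
      G.Adj x y ∨ s(x, y) ∈ ({s(a, b), s(b, c), s(c, d), s(d, a)} : Set (Sym2 V)))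

/-- `G` contains `H`: some even subdivision of `H` (each edge replaced by an
internally disjoint path with an odd number of edges) is isomorphic to a
central subgraph of `G`. -/
def Contains (G : SimpleGraph V) (H : SimpleGraph W) : Prop :=
  ∃ (f : W → V) (p : ∀ u v : W, H.Adj u v → G.Walk (f u) (f v)),
    Function.Injective f ∧
    (∀ u v (h : H.Adj u v), (p u v h).IsPath ∧ Odd (p u v h).length) ∧
    (∀ u v (h : H.Adj u v), p v u h.symm = (p u v h).reverse) ∧
    (∀ u v (h : H.Adj u v) (w : W), f w ∈ (p u v h).support → w = u ∨ w = v) ∧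
    (∀ u v u' v' (h : H.Adj u v) (h' : H.Adj u' v'), s(u, v) ≠ s(u', v') →
      ∀ x, x ∈ (p u v h).support → x ∈ (p u' v' h').support →
        (x = f u ∨ x = f v) ∧ (x = f u' ∨ x = f v')) ∧
    HasPMOn G ((Set.range f ∪ {x | ∃ u v, ∃ h : H.Adj u v, x ∈ (p u v h).support})ᶜ)

/-- `K'` is obtained from `K` by a bicontraction: contracting both edges at a
vertex `u` of degree two (with distinct neighbors `a` and `b`) and deleting
parallel edges. -/
def BicontractAt (K K' : (⊤ : SimpleGraph V).Subgraph) : Prop :=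
  ∃ u a b : V, a ≠ b ∧ K.Adj u a ∧ K.Adj u b ∧
    (∀ x, K.Adj u x → x = a ∨ x = b) ∧
    K'.verts = K.verts \ {u, a} ∧
    ∀ x y, K'.Adj x y ↔ (x ∈ K.verts \ {u, a} ∧ y ∈ K.verts \ {u, a} ∧ x ≠ y ∧
      ∃ x' y', K.Adj x' y' ∧ (x' = x ∨ (x = b ∧ (x' = a ∨ x' = u))) ∧
        (y' = y ∨ (y = b ∧ (y' = a ∨ y' = u))))

/-- `G` weakly contains `H`: `G` has a central subgraph `K` from which a graph
isomorphic to `H` can be obtained by a sequence of bicontractions. -/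
def WeaklyContains (G : SimpleGraph V) (H : SimpleGraph W) : Prop :=
  ∃ K : (⊤ : SimpleGraph V).Subgraph,
    (∀ ⦃x y⦄, K.Adj x y → G.Adj x y) ∧
    HasPMOn G (K.vertsᶜ) ∧
    ∃ K' : (⊤ : SimpleGraph V).Subgraph,
      Relation.ReflTransGen BicontractAt K K' ∧ Nonempty (K'.coe ≃g H)

/-- The Heawood graph (LCF notation `[5, -5]⁷`): a 14-cycle together with the
chords `{i, i+5}` for even `i`. -/
def heawood : SimpleGraph (Fin 14) :=
  SimpleGraph.fromRel (fun i j => j = i + 1 ∨ (Even (i : ℕ) ∧ j = i + 5))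

/-- The digraph `D(G, M)` on the color class `A`, obtained from `G` by
directing every edge from `A` to `B` and contracting every edge of `M`. -/
def DGM (G : SimpleGraph V) (A : Set V) (M : G.Subgraph) : A → A → Prop :=
  fun a a' => ∃ b, M.Adj (↑a' : V) b ∧ G.Adj (↑a : V) b

/-- A digraph is strongly `k`-connected if deleting fewer than `k` vertices
leaves it strongly connected. -/
def StronglyKConnected {α : Type*} (D : α → α → Prop) (k : ℕ) : Prop :=
  ∀ S : Set α, S.ncard < k → ∀ u v : α, u ∉ S → v ∉ S →
    Relation.ReflTransGen (fun x y => D x y ∧ x ∉ S ∧ y ∉ S) u v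

/-- The edge `u₁u₂` of the graph with vertex set `S` obtained from `G₁` is
reducing: deleting both ends destroys 1-extendability. -/
def ReducingIn (G₁ : SimpleGraph V) (S : Set V) (u₁ u₂ : V) : Prop :=
  G₁.Adj u₁ u₂ ∧
    ¬ OneExtendableOn (restrictG G₁ (({u₁, u₂} : Set V)ᶜ)) (S \ {u₁, u₂})

/-- `G` (bipartite with bipartition `(A, B)`) is a 2-sum of `G₁` (with vertex
set `V₁`) and `G₂` (with vertex set `V₂`) along the edge `u₁u₂`. -/
def IsTwoSum (G : SimpleGraph V) (A B : Set V) (u₁ u₂ : V)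
    (G₁ G₂ : SimpleGraph V) (V₁ V₂ : Set V) : Prop :=
  u₁ ∈ A ∧ u₂ ∈ B ∧ G.Adj u₁ u₂ ∧
  ∃ X : Set V, X.Nonempty ∧ X ⊆ A \ {u₁} ∧ X ≠ A \ {u₁} ∧
    (nbdSet G X \ {u₂}).ncard = X.ncard ∧
    V₂ = ((X ∪ (nbdSet G X \ {u₂}))ᶜ : Set V) ∧
    V₁ = X ∪ (nbdSet G X \ {u₂}) ∪ {u₁, u₂} ∧
    (∀ x y, G₁.Adj x y ↔ ((G.Adj x y ∧ x ∈ V₁ ∧ y ∈ V₁) ∨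
      (x = u₁ ∧ y ∈ {w | w ∈ nbdSet G X \ {u₂} ∧ ¬ G.Adj u₁ w ∧ ∃ z, z ∉ V₁ ∧ G.Adj w z}) ∨
      (y = u₁ ∧ x ∈ {w | w ∈ nbdSet G X \ {u₂} ∧ ¬ G.Adj u₁ w ∧ ∃ z, z ∉ V₁ ∧ G.Adj w z}))) ∧
    (∀ x y, G₂.Adj x y ↔ ((G.Adj x y ∧ x ∈ V₂ ∧ y ∈ V₂) ∨
      (x = u₂ ∧ y ∈ {w | w ∈ (A \ X) \ {u₁} ∧ ¬ G.Adj u₂ w ∧ ∃ z, z ∉ V₂ ∧ G.Adj w z}) ∨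
      (y = u₂ ∧ x ∈ {w | w ∈ (A \ X) \ {u₁} ∧ ¬ G.Adj u₂ w ∧ ∃ z, z ∉ V₂ ∧ G.Adj w z})))

/-- A trisector: a set of four vertices whose deletion leaves at least three
connected components. -/
def IsTrisector (G : SimpleGraph V) (X : Set V) : Prop :=
  X.ncard = 4 ∧ 3 ≤ Nat.card (G.induce (Xᶜ : Set V)).ConnectedComponent

/-!
Let `S` be a set of at most two vertices and `C` a union of components of `G - S` whose complement
`D` in `G - S` is nonempty. In a perfect matching, a vertex set closed under taking partners has
even size. Applied to `C` together with the vertices of `S` matched into `C`, for perfect matchings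
through one or two prescribed edges, this shows: a single vertex `v` cannot separate (take the
edge from `v` into `C`, then the edge from `v` into `D`: `|C|` comes out both even and odd); and
if `S = {v, w}`, then `|C|` is odd, and all neighbours of `v` and of `w` in `C` coincide in a
single vertex `x`. Then `x` would be a cut vertex unless `C = {x}`. The same holds for `D`, so `G`
has at most four vertices.
-/

/-- `C` is a fragment of the separator `S`: a nonempty union of components of `G - S` whose
complement in `G - S` is nonempty. -/
structure IsFragment (G : SimpleGraph V) (S C : Set V) : Prop where
  nonempty : C.Nonempty
  disjoint : Disjoint C S
  nbdSet_subset : nbdSet G C ⊆ S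
  compl_nonempty : (C ∪ S)ᶜ.Nonempty

section Fragments

variable {G : SimpleGraph V} {S C : Set V}

namespace IsFragment

theorem compl (h : IsFragment G S C) : IsFragment G S (C ∪ S)ᶜ where
  nonempty := h.compl_nonempty
  disjoint := Set.disjoint_left.2 fun _ hx hs => hx (Or.inr hs)
  nbdSet_subset := by
    rintro y ⟨hy, x, hx, hxy⟩
    rw [Set.notMem_compl_iff] at hy
    rcases hy with hyC | hyS
    · exact absurd (h.nbdSet_subset ⟨fun hxC => hx (Or.inl hxC), y, hyC, hxy.symm⟩)
        fun hxS => hx (Or.inr hxS)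
    · exact hyS
  compl_nonempty := by
    obtain ⟨c, hc⟩ := h.nonempty
    refine ⟨c, ?_⟩
    rintro (hc' | hcS)
    · exact hc' (Or.inl hc)
    · exact Set.disjoint_left.1 h.disjoint hc hcS

theorem exists_adj (hG : G.Preconnected) (h : IsFragment G S C) :
    ∃ s ∈ S, ∃ c ∈ C, G.Adj s c := by
  obtain ⟨c, hc⟩ := h.nonempty
  obtain ⟨x, hx⟩ := h.compl_nonempty
  obtain ⟨p⟩ := hG c x
  obtain ⟨d, -, hd, hd'⟩ := p.exists_boundary_dart C hc fun hxC => hx (Or.inl hxC)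
  exact ⟨d.snd, h.nbdSet_subset ⟨hd', d.fst, hd, d.adj⟩, d.fst, hd, d.adj.symm⟩

end IsFragment

theorem exists_isFragment_of_not_preconnected (h : ¬ (G.induce Sᶜ).Preconnected) :
    ∃ C, IsFragment G S C := by
  obtain ⟨a, b, hab⟩ : ∃ a b, ¬ (G.induce Sᶜ).Reachable a b := by
    simpa [Preconnected] using h
  refine ⟨{x | ∃ hx : x ∈ Sᶜ, (G.induce Sᶜ).Reachable a ⟨x, hx⟩},
    ⟨a, a.2, .rfl⟩, Set.disjoint_left.2 fun _ ⟨hx, _⟩ => hx, ?_, ⟨b, ?_⟩⟩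
  · rintro y ⟨hy, x, ⟨hx, hax⟩, hxy⟩
    by_contra hyS
    exact hy ⟨hyS, hax.trans (Adj.reachable (G := G.induce Sᶜ) hxy)⟩
  · rintro (⟨_, hab'⟩ | hbS)
    · exact hab hab'
    · exact b.2 hbS

end Fragments

section Matchings

variable {G : SimpleGraph V} {M : G.Subgraph}

theorem SimpleGraph.Subgraph.IsPerfectMatching.even_ncard_of_forall_adj_mem [Finite V]
    (hM : M.IsPerfectMatching) {F : Set V} (hF : ∀ x ∈ F, ∀ y, M.Adj x y → y ∈ F) :
    Even F.ncard := by
  classical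
  have hmatch : (M.induce F).IsMatching := by
    intro v hv
    obtain ⟨p, hp, hu⟩ := hM.1 (hM.2 v)
    exact ⟨p, ⟨hv, hF v hv p hp, hp⟩, fun y hy => hu y hy.2.2⟩
  have := Fintype.ofFinite (M.induce F).verts
  have h := hmatch.even_card
  rwa [Set.toFinset_card, ← Nat.card_eq_fintype_card, Subgraph.induce_verts,
    Nat.card_coe_set_eq] at h

theorem SimpleGraph.Subgraph.IsPerfectMatching.even_ncard_union [Finite V]
    (hM : M.IsPerfectMatching) {E S T : Set V} (hE : nbdSet G E ⊆ S)
    (hT : ∀ t ∈ T, ∃ e ∈ E, M.Adj t e) (hS : ∀ s ∈ S, ∀ e ∈ E, M.Adj s e → s ∈ T) :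
    Even (E ∪ T).ncard := by
  refine hM.even_ncard_of_forall_adj_mem ?_
  rintro x (hx | hx) y hxy
  · by_cases hy : y ∈ E
    · exact Or.inl hy
    · exact Or.inr (hS y (hE ⟨hy, x, hx, M.adj_sub hxy⟩) x hx hxy.symm)
  · obtain ⟨e, he, hxe⟩ := hT x hx
    exact Or.inl (hM.1.eq_of_adj_left hxe hxy ▸ he)

end Matchings

section Extendable

variable {G : SimpleGraph V} {k l : ℕ} {v w c d : V}

theorem KExtendable.mono (h : KExtendable G l) (hkl : k ≤ l) : KExtendable G k :=
  fun M hM hcard => h M hM (hcard.trans hkl)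

theorem KExtendable.exists_isPerfectMatching_adj (h : KExtendable G 1) (hvc : G.Adj v c) :
    ∃ M : G.Subgraph, M.IsPerfectMatching ∧ M.Adj v c := by
  obtain ⟨M, hle, hM⟩ := h _ (Subgraph.IsMatching.subgraphOfAdj hvc) (by simp)
  exact ⟨M, hM, hle.2 (by simp)⟩

theorem KExtendable.exists_isPerfectMatching_adj_adj (h : KExtendable G 2)
    (hvc : G.Adj v c) (hwd : G.Adj w d) (hvw : v ≠ w) (hvd : v ≠ d) (hcw : c ≠ w) (hcd : c ≠ d) :
    ∃ M : G.Subgraph, M.IsPerfectMatching ∧ M.Adj v c ∧ M.Adj w d := by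
  have hdisj : Disjoint (G.subgraphOfAdj hvc).support (G.subgraphOfAdj hwd).support := by
    simp [support_subgraphOfAdj, hvw.symm, hvd.symm, hcw.symm, hcd.symm]
  obtain ⟨M, hle, hM⟩ := h _
    ((Subgraph.IsMatching.subgraphOfAdj hvc).sup (Subgraph.IsMatching.subgraphOfAdj hwd)
      hdisj)
    (by
      rw [Subgraph.edgeSet_sup, edgeSet_subgraphOfAdj, edgeSet_subgraphOfAdj]
      exact (Set.ncard_union_le _ _).trans (by simp))
  exact ⟨M, hM, hle.2 (by simp), hle.2 (by simp)⟩

end Extendable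

section Separators

variable [Finite V] {G : SimpleGraph V} {C S : Set V} {v w : V}

theorem KExtendable.not_isFragment_singleton (hext : KExtendable G 1) (hG : G.Preconnected) :
    ¬ IsFragment G {v} C := by
  intro hC
  obtain ⟨_, hv, c, hc, hvc⟩ := hC.exists_adj hG
  obtain ⟨_, hv', d, hd, hvd⟩ := hC.compl.exists_adj hG
  rw [Set.mem_singleton_iff.1 hv] at hvc
  rw [Set.mem_singleton_iff.1 hv'] at hvd
  have hvC : v ∉ C := Set.disjoint_right.1 hC.disjoint rfl
  obtain ⟨M, hM, hMc⟩ := hext.exists_isPerfectMatching_adj hvc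
  obtain ⟨N, hN, hNd⟩ := hext.exists_isPerfectMatching_adj hvd
  have heven_insert : Even (C ∪ {v}).ncard :=
    hM.even_ncard_union hC.nbdSet_subset (by simpa using ⟨c, hc, hMc⟩) fun s hs _ _ _ => hs
  have heven : Even (C ∪ ∅).ncard :=
    hN.even_ncard_union hC.nbdSet_subset (by simp) fun s hs e he hse => by
      rw [Set.mem_singleton_iff.1 hs] at hse
      rw [hN.1.eq_of_adj_left hse hNd] at he
      exact absurd (Or.inl he) hd
  rw [Set.union_singleton, Set.ncard_insert_of_notMem hvC, Nat.even_add_one] at heven_insert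
  exact heven_insert (by simpa using heven)

theorem KExtendable.exists_adj_of_isFragment_pair (hext : KExtendable G 1) (hG : G.Preconnected)
    (hvw : v ≠ w) (hC : IsFragment G {v, w} C) : ∃ c ∈ C, G.Adj v c := by
  by_contra! hv
  have hvC : v ∉ C := Set.disjoint_right.1 hC.disjoint (Or.inl rfl)
  refine hext.not_isFragment_singleton hG (v := w) ⟨hC.nonempty, ?_, ?_, v, ?_⟩
  · exact hC.disjoint.mono_right (by simp)
  · intro y hy
    obtain rfl | hyw := hC.nbdSet_subset hy
    · obtain ⟨-, x, hx, hxy⟩ := hy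
      exact absurd hxy.symm (hv x hx)
    · exact hyw
  · rintro (hv' | hv')
    exacts [hvC hv', hvw hv']

theorem KExtendable.odd_ncard_of_isFragment_pair (hext : KExtendable G 2) (hG : G.Preconnected)
    (hvw : v ≠ w) (hC : IsFragment G {v, w} C) : Odd C.ncard := by
  obtain ⟨c, hc, hvc⟩ := (hext.mono one_le_two).exists_adj_of_isFragment_pair hG hvw hC
  have hD := hC.compl
  generalize hDdef : (C ∪ {v, w})ᶜ = D at hD
  obtain ⟨d, hd, hwd⟩ := (hext.mono one_le_two).exists_adj_of_isFragment_pair hG hvw.symm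
    (Set.pair_comm v w ▸ hD)
  rw [← hDdef] at hd
  have hdC : d ∉ C := fun h => hd (Or.inl h)
  have hvd : v ≠ d := fun h => hd (Or.inr (Or.inl h.symm))
  have hcw : c ≠ w := fun h => Set.disjoint_left.1 hC.disjoint hc (Or.inr h)
  obtain ⟨M, hM, hMc, hMd⟩ := hext.exists_isPerfectMatching_adj_adj hvc hwd hvw hvd hcw
    (fun h => hdC (h ▸ hc))
  have h := hM.even_ncard_union (T := {v}) hC.nbdSet_subset (by simpa using ⟨c, hc, hMc⟩)
    fun s hs e he hse => by
      obtain rfl | rfl := hs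
      · rfl
      · exact absurd (hM.1.eq_of_adj_left hse hMd ▸ he) hdC
  rwa [Set.union_singleton, Set.ncard_insert_of_notMem (Set.disjoint_right.1 hC.disjoint
    (Or.inl rfl)), Nat.even_add_one, Nat.not_even_iff_odd] at h

theorem KExtendable.eq_of_isFragment_pair (hext : KExtendable G 2) (hG : G.Preconnected)
    (hvw : v ≠ w) (hC : IsFragment G {v, w} C) {p q : V} (hp : p ∈ C) (hq : q ∈ C)
    (hvp : G.Adj v p) (hwq : G.Adj w q) : p = q := by
  by_contra hpq
  have hSC : ∀ s ∈ ({v, w} : Set V), s ∉ C := fun s hs hsC =>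
    Set.disjoint_left.1 hC.disjoint hsC hs
  obtain ⟨M, hM, hMp, hMq⟩ := hext.exists_isPerfectMatching_adj_adj hvp hwq hvw
    (fun h => hSC v (Or.inl rfl) (h ▸ hq)) (fun h => hSC w (Or.inr rfl) (h ▸ hp)) hpq
  have h := hM.even_ncard_union hC.nbdSet_subset
    (by rintro t (rfl | rfl); exacts [⟨p, hp, hMp⟩, ⟨q, hq, hMq⟩]) fun s hs _ _ _ => hs
  rw [Set.ncard_union_eq hC.disjoint, Set.ncard_pair hvw, Nat.even_add] at h
  exact Nat.not_even_iff_odd.2 (hext.odd_ncard_of_isFragment_pair hG hvw hC) (h.2 even_two)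

theorem KExtendable.exists_eq_singleton_of_isFragment_pair (hext : KExtendable G 2)
    (hG : G.Preconnected) (hvw : v ≠ w) (hC : IsFragment G {v, w} C) : ∃ x, C = {x} := by
  obtain ⟨x, hx, hvx⟩ := (hext.mono one_le_two).exists_adj_of_isFragment_pair hG hvw hC
  obtain ⟨y, hy, hwy⟩ := (hext.mono one_le_two).exists_adj_of_isFragment_pair hG hvw.symm
    (Set.pair_comm v w ▸ hC)
  have hxy := hext.eq_of_isFragment_pair hG hvw hC hx hy hvx hwy
  have hunique : ∀ z ∈ C, ∀ s ∈ ({v, w} : Set V), G.Adj s z → z = x := by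
    rintro z hz s (rfl | rfl) hsz
    · exact (hext.eq_of_isFragment_pair hG hvw hC hz hy hsz hwy).trans hxy.symm
    · exact (hext.eq_of_isFragment_pair hG hvw hC hx hz hvx hsz).symm
  refine ⟨x, by_contra fun hne => ?_⟩
  have hvC : v ∉ C := Set.disjoint_right.1 hC.disjoint (Or.inl rfl)
  refine (hext.mono one_le_two).not_isFragment_singleton hG (v := x) (C := C \ {x})
    ⟨?_, Set.disjoint_sdiff_left, ?_, v, ?_⟩
  · exact Set.sdiff_nonempty.2 fun hCx => hne ((Set.Nonempty.subset_singleton_iff ⟨x, hx⟩).1 hCx)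
  · rintro y ⟨hy, z, ⟨hzC, hzx⟩, hzy⟩
    by_cases hyC : y ∈ C
    · exact by_contra fun hyx => hy ⟨hyC, hyx⟩
    · exact absurd (hunique z hzC y (hC.nbdSet_subset ⟨hyC, z, hzC, hzy⟩) hzy.symm) hzx
  · rintro (⟨hv, -⟩ | rfl)
    exacts [hvC hv, hvC hx]

theorem KExtendable.not_isFragment (hext : KExtendable G 2) (hG : G.Preconnected)
    (hcard : 5 ≤ Nat.card V) (hS : S.ncard ≤ 2) : ¬ IsFragment G S C := by
  intro hC
  obtain h0 | h1 | h2 : S.ncard = 0 ∨ S.ncard = 1 ∨ S.ncard = 2 := by omega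
  · obtain ⟨s, hs, -⟩ := hC.exists_adj hG
    exact ((Set.ncard_eq_zero (s := S)).1 h0 ▸ hs : s ∈ (∅ : Set V))
  · obtain ⟨v, rfl⟩ := Set.ncard_eq_one.1 h1
    exact (hext.mono one_le_two).not_isFragment_singleton hG hC
  · obtain ⟨v, w, hvw, rfl⟩ := Set.ncard_eq_two.1 h2
    obtain ⟨x, hx⟩ := hext.exists_eq_singleton_of_isFragment_pair hG hvw hC
    obtain ⟨y, hy⟩ := hext.exists_eq_singleton_of_isFragment_pair hG hvw hC.compl
    have : Nat.card V ≤ 4 := calc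
      Nat.card V = (C ∪ {v, w} ∪ (C ∪ {v, w})ᶜ).ncard := by simp
      _ ≤ C.ncard + ({v, w} : Set V).ncard + (C ∪ {v, w})ᶜ.ncard :=
        (Set.ncard_union_le _ _).trans (Nat.add_le_add_right (Set.ncard_union_le _ _) _)
      _ = 4 := by rw [hy, hx, h2, Set.ncard_singleton, Set.ncard_singleton]
    omega

end Separators

/-- Every connected brace on at least five vertices is 3-connected. -/
theorem brace_threeConnected [Fintype V] (G : SimpleGraph V)
    (hbrace : IsBrace G) (hconn : G.Connected) (hcard : 5 ≤ Fintype.card V) :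
    KConnected G 3 := by
  refine ⟨by omega, fun S hS => ?_⟩
  have hSc : (Sᶜ : Set V).Nonempty := by
    rw [Set.nonempty_compl]
    rintro rfl
    rw [Set.ncard_univ, Nat.card_eq_fintype_card] at hS
    omega
  refine (connected_iff _).2 ⟨by_contra fun h => ?_, hSc.to_subtype⟩
  obtain ⟨C, hC⟩ := exists_isFragment_of_not_preconnected h
  exact hbrace.2.not_isFragment hconn.preconnected (by rwa [Nat.card_eq_fintype_card])
    (by omega) hC
end

section
/- Let a bipartite graph G contain a bipartite graph H (i.e., some even subdivision of H is isomorphic to a central subgraph of G). If G admits a Pfaffian orientation, then so does H. -/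
open SimpleGraph

universe u v

variable {V : Type u} {W : Type v}

/-! Orient an edge `ab` of `H` from `a` to `b` when the path of `G` replacing it has an odd number
of edges directed forward by the Pfaffian orientation of `G`; as the path has odd length, exactly
one direction qualifies. A central even cycle `c` of `H` lifts to the cycle `C` of `G` through the
paths of its edges. `C` has even length, since each path has odd length, and the same parity of
forward edges as `c`. It is central as well: the perfect matching of `G` minus the subdivision,
every other edge of the paths of the edges of a perfect matching of `H - V(c)`, and every other
interior edge of the paths of the other edges off `c` together match `G - V(C)`. -/

section ForwardCount

variable {G : SimpleGraph V} (o : GraphOrientation G)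

lemma GraphOrientation.ite_dir_add_ite_dir {a b : V} (h : G.Adj a b) [Decidable (o.dir a b)]
    [Decidable (o.dir b a)] :
    (if o.dir a b then 1 else 0) + (if o.dir b a then 1 else 0) = 1 := by
  have := o.asymm a b
  have := o.asymm b a
  have := (o.adj_iff a b).1 h
  split_ifs <;> tauto

lemma forwardCount_nil {a : V} : forwardCount o (Walk.nil : G.Walk a a) = 0 := by
  simp [forwardCount]

open scoped Classical in
lemma forwardCount_cons {a b c : V} (h : G.Adj a b) (w : G.Walk b c) :
    forwardCount o (.cons h w) = (if o.dir a b then 1 else 0) + forwardCount o w := by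
  simp [forwardCount, List.countP_cons, add_comm]

lemma forwardCount_append {a b c : V} (w : G.Walk a b) (w' : G.Walk b c) :
    forwardCount o (w.append w') = forwardCount o w + forwardCount o w' := by
  simp [forwardCount, Walk.darts_append, List.countP_append]

lemma forwardCount_add_forwardCount_reverse {a b : V} (w : G.Walk a b) :
    forwardCount o w + forwardCount o w.reverse = w.length := by
  classical
  induction w with
  | nil => exact forwardCount_nil o
  | cons h w ih =>
    rw [Walk.reverse_cons, forwardCount_append, forwardCount_cons, forwardCount_cons,
      forwardCount_nil, Walk.length_cons, ← ih]
    have := o.ite_dir_add_ite_dir h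
    omega

end ForwardCount

namespace SimpleGraph

lemma subgraphOfAdj_eq_of_sym2_eq {G : SimpleGraph V} {a b c d : V} (h : G.Adj a b)
    (h' : G.Adj c d) (he : s(a, b) = s(c, d)) : G.subgraphOfAdj h = G.subgraphOfAdj h' := by
  rcases Sym2.eq_iff.1 he with ⟨rfl, rfl⟩ | ⟨rfl, rfl⟩
  · rfl
  · exact subgraphOfAdj_symm h'

lemma Subgraph.IsMatching.iSup_of_ne_disjoint {G : SimpleGraph V} {ι : Sort*}
    {f : ι → G.Subgraph} (hM : ∀ i, (f i).IsMatching)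
    (hd : ∀ i j, f i ≠ f j → Disjoint (f i).verts (f j).verts) : (⨆ i, f i).IsMatching := by
  rw [← iSup_range' (fun M => M) f]
  refine IsMatching.iSup (fun ⟨_, i, rfl⟩ => hM i) fun ⟨_, i, hi⟩ ⟨_, j, hj⟩ hne => ?_
  subst hi hj
  rw [(hM i).support_eq_verts, (hM j).support_eq_verts]
  exact hd i j fun h => hne (Subtype.ext h)

lemma Subgraph.IsMatching.sym2_eq_of_adj_of_adj {G : SimpleGraph V} {M : G.Subgraph}
    (hM : M.IsMatching) {a b a' b' c : V} (h : M.Adj a b) (h' : M.Adj a' b')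
    (hc : c = a ∨ c = b) (hc' : c = a' ∨ c = b') : s(a, b) = s(a', b') := by
  have key : ∀ {y y'}, M.Adj c y → M.Adj c y' → s(c, y) = s(c, y') :=
    fun hy hy' => by rw [hM.eq_of_adj_left hy hy']
  rcases hc with rfl | rfl <;> rcases hc' with rfl | rfl
  · exact key h h'
  · exact (key h h'.symm).trans Sym2.eq_swap
  · exact Sym2.eq_swap.trans (key h.symm h')
  · exact Sym2.eq_swap.trans ((key h.symm h'.symm).trans Sym2.eq_swap)

namespace Walk

variable {G : SimpleGraph V} {u v x : V} {r : ℕ}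

/-- The edges of `w` at the positions `i ≡ r (mod 2)` with `r ≤ i < w.length - r`. -/
def altMatching (w : G.Walk u v) (r : ℕ) : G.Subgraph :=
  ⨆ i : {i : ℕ // r ≤ i ∧ i + r < w.length ∧ i % 2 = r % 2},
    G.subgraphOfAdj (w.adj_getVert_succ (Nat.lt_of_le_of_lt (Nat.le_add_right _ _) i.2.2.1))

lemma mem_verts_altMatching {w : G.Walk u v} :
    x ∈ (w.altMatching r).verts ↔ ∃ i, (r ≤ i ∧ i + r < w.length ∧ i % 2 = r % 2) ∧
      (x = w.getVert i ∨ x = w.getVert (i + 1)) := by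
  simp [altMatching, Subgraph.verts_iSup, eq_comm]

lemma exists_getVert_eq_of_mem_verts_altMatching {w : G.Walk u v}
    (hx : x ∈ (w.altMatching r).verts) : ∃ k, r ≤ k ∧ k + r ≤ w.length ∧ w.getVert k = x := by
  obtain ⟨i, hi, rfl | rfl⟩ := mem_verts_altMatching.1 hx
  · exact ⟨i, by omega, by omega, rfl⟩
  · exact ⟨i + 1, by omega, by omega, rfl⟩

lemma getVert_mem_verts_altMatching {w : G.Walk u v} (hw : Odd w.length) {k : ℕ}
    (hk : r ≤ k) (hkr : k + r ≤ w.length) : w.getVert k ∈ (w.altMatching r).verts := by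
  obtain ⟨l, hl⟩ := hw
  rw [mem_verts_altMatching]
  by_cases hpar : k % 2 = r % 2
  · exact ⟨k, ⟨hk, by omega, hpar⟩, .inl rfl⟩
  · exact ⟨k - 1, ⟨by omega, by omega, by omega⟩, .inr (by rw [Nat.sub_add_cancel (by omega)])⟩

lemma mem_support_of_mem_verts_altMatching {w : G.Walk u v}
    (hx : x ∈ (w.altMatching r).verts) : x ∈ w.support := by
  obtain ⟨k, -, -, rfl⟩ := exists_getVert_eq_of_mem_verts_altMatching hx
  exact w.getVert_mem_support k

lemma IsPath.notMem_verts_altMatching {w : G.Walk u v} (hw : w.IsPath) (hr : 0 < r)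
    (hx : x = u ∨ x = v) : x ∉ (w.altMatching r).verts := by
  intro hmem
  obtain ⟨k, hk, hkr, rfl⟩ := exists_getVert_eq_of_mem_verts_altMatching hmem
  rcases hx with hx | hx
  · have := hw.getVert_injOn (show k ≤ w.length by omega) (show 0 ≤ w.length by omega)
      (hx.trans w.getVert_zero.symm)
    omega
  · have := hw.getVert_injOn (show k ≤ w.length by omega) (show w.length ≤ w.length by omega)
      (hx.trans w.getVert_length.symm)
    omega

lemma IsPath.isMatching_altMatching {w : G.Walk u v} (hw : w.IsPath) (r : ℕ) :
    (w.altMatching r).IsMatching := by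
  refine Subgraph.IsMatching.iSup (fun _ => .subgraphOfAdj _) fun ⟨i, hi⟩ ⟨j, hj⟩ hij => ?_
  have hne : i ≠ j := fun h => hij (Subtype.ext h)
  dsimp only
  rw [(Subgraph.IsMatching.subgraphOfAdj _).support_eq_verts,
    (Subgraph.IsMatching.subgraphOfAdj _).support_eq_verts, subgraphOfAdj_verts,
    subgraphOfAdj_verts, Set.disjoint_left]
  rintro _ (rfl | rfl) (h | h) <;>
    have := hw.getVert_injOn (show _ ≤ w.length by omega) (show _ ≤ w.length by omega) h <;> omega

lemma altMatching_reverse_le {w : G.Walk u v} (hw : Odd w.length) :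
    w.reverse.altMatching r ≤ w.altMatching r := by
  obtain ⟨l, hl⟩ := hw
  refine iSup_le fun ⟨i, hi⟩ => le_iSup_of_le ⟨w.length - 1 - i, by simp only [length_reverse] at hi; omega⟩
    (subgraphOfAdj_eq_of_sym2_eq _ _ ?_).le
  simp only [getVert_reverse, length_reverse] at hi ⊢
  rw [Sym2.eq_swap]
  congr 2 <;> omega

lemma altMatching_reverse {w : G.Walk u v} (hw : Odd w.length) (r : ℕ) :
    w.reverse.altMatching r = w.altMatching r :=
  (altMatching_reverse_le hw).antisymm <| by
    simpa using altMatching_reverse_le (w := w.reverse) (r := r) (by simpa using hw)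

end Walk

end SimpleGraph

structure EvenSubdivision (G : SimpleGraph V) (H : SimpleGraph W) where
  embed : W → V
  path : ∀ ⦃a b : W⦄, H.Adj a b → G.Walk (embed a) (embed b)
  injective : Function.Injective embed
  isPath : ∀ ⦃a b : W⦄ (h : H.Adj a b), (path h).IsPath
  odd_length : ∀ ⦃a b : W⦄ (h : H.Adj a b), Odd (path h).length
  path_symm : ∀ ⦃a b : W⦄ (h : H.Adj a b), path h.symm = (path h).reverse
  eq_or_eq_of_embed_mem_support : ∀ ⦃a b : W⦄ (h : H.Adj a b) (c : W),
    embed c ∈ (path h).support → c = a ∨ c = b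
  mem_support_inter : ∀ ⦃a b a' b' : W⦄ (h : H.Adj a b) (h' : H.Adj a' b'), s(a, b) ≠ s(a', b') →
    ∀ x ∈ (path h).support, x ∈ (path h').support →
      (x = embed a ∨ x = embed b) ∧ (x = embed a' ∨ x = embed b')

namespace EvenSubdivision

variable {G : SimpleGraph V} {H : SimpleGraph W} (S : EvenSubdivision G H)

def verts : Set V :=
  Set.range S.embed ∪ {x | ∃ a b, ∃ h : H.Adj a b, x ∈ (S.path h).support}

lemma _root_.Contains.exists_evenSubdivision (h : Contains G H) :
    ∃ S : EvenSubdivision G H, HasPMOn G S.vertsᶜ :=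
  let ⟨f, p, hinj, hp, hsymm, hends, hinter, hM⟩ := h
  ⟨⟨f, p, hinj, fun a b h => (hp a b h).1, fun a b h => (hp a b h).2, hsymm, hends, hinter⟩, hM⟩

lemma mem_verts_of_mem_support {a b : W} (h : H.Adj a b) {x : V}
    (hx : x ∈ (S.path h).support) : x ∈ S.verts :=
  .inr ⟨a, b, h, hx⟩

lemma exists_embed_eq_of_mem_support_inter {d d' : H.Dart} (hne : d.edge ≠ d'.edge) {x : V}
    (hx : x ∈ (S.path d.adj).support) (hx' : x ∈ (S.path d'.adj).support) :
    ∃ c, (c = d.fst ∨ c = d.snd) ∧ (c = d'.fst ∨ c = d'.snd) ∧ S.embed c = x := by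
  obtain ⟨h1, h2⟩ := S.mem_support_inter d.adj d'.adj hne x hx hx'
  rcases h1 with rfl | rfl <;>
    exact ⟨_, by simp, h2.imp (S.injective ·) (S.injective ·), rfl⟩

lemma mem_support_path_symm_iff {a b : W} (h : H.Adj a b) {x : V} :
    x ∈ (S.path h.symm).support ↔ x ∈ (S.path h).support := by
  rw [S.path_symm h, Walk.support_reverse, List.mem_reverse]

def walk : ∀ {a b : W}, H.Walk a b → G.Walk (S.embed a) (S.embed b)
  | _, _, .nil => .nil
  | _, _, .cons h w => (S.path h).append (walk w)

@[simp]
lemma walk_nil {a : W} : S.walk (.nil : H.Walk a a) = .nil := rfl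

@[simp]
lemma walk_cons {a b c : W} (h : H.Adj a b) (w : H.Walk b c) :
    S.walk (.cons h w) = (S.path h).append (S.walk w) := rfl

lemma length_le_length_walk {a b : W} (w : H.Walk a b) : w.length ≤ (S.walk w).length := by
  induction w with
  | nil => simp
  | cons h w ih =>
    have := (S.odd_length h).pos
    simp only [walk_cons, Walk.length_append, Walk.length_cons]
    omega

lemma even_length_walk_iff {a b : W} (w : H.Walk a b) :
    Even (S.walk w).length ↔ Even w.length := by
  induction w with
  | nil => simp
  | cons h w ih =>
    have := Nat.not_even_iff_odd.2 (S.odd_length h)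
    simp [Nat.even_add, Nat.even_add_one, ih, this]

lemma mem_support_walk_iff {a b : W} (w : H.Walk a b) {x : V} :
    x ∈ (S.walk w).support ↔ x = S.embed a ∨ ∃ d ∈ w.darts, x ∈ (S.path d.adj).support := by
  induction w with
  | nil => simp
  | cons h w ih =>
    simp only [walk_cons, Walk.mem_support_append_iff, ih, Walk.darts_cons, List.mem_cons,
      exists_eq_or_imp]
    have := (S.path h).start_mem_support
    have := (S.path h).end_mem_support
    constructor
    · rintro (hx | rfl | hx) <;> tauto
    · rintro (rfl | hx | hx) <;> tauto

lemma support_tail_walk {a b : W} (w : H.Walk a b) :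
    (S.walk w).support.tail = w.darts.flatMap fun d => (S.path d.adj).support.tail := by
  induction w with
  | nil => simp
  | cons h w ih =>
    rw [walk_cons, Walk.support_append, ← Walk.cons_tail_support (S.path h), List.cons_append,
      List.tail_cons, ih]
    simp

lemma isCycle_walk {a : W} {c : H.Walk a a} (hc : c.IsCycle) : (S.walk c).IsCycle := by
  have hlen := hc.three_le_length.trans (S.length_le_length_walk c)
  refine Walk.isCycle_iff_isPath_tail_and_le_length.2 ⟨?_, hlen⟩
  have hne : ¬ (S.walk c).Nil := Walk.not_nil_iff_lt_length.2 (by omega)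
  rw [Walk.isPath_def, Walk.support_tail_of_not_nil _ hne, S.support_tail_walk, List.nodup_flatMap]
  have hedges : c.darts.Pairwise fun d d' => d.edge ≠ d'.edge :=
    List.pairwise_map.1 hc.edges_nodup
  have hsnd : c.darts.Pairwise fun d d' => d.snd ≠ d'.snd := by
    refine List.pairwise_map.1 (?_ : (c.darts.map (·.snd)).Nodup)
    rw [Walk.map_snd_darts]
    exact hc.support_nodup
  refine ⟨fun d _ => (S.isPath d.adj).support_nodup.tail, (hedges.and hsnd).imp ?_⟩
  rintro d d' ⟨hne, hsnd⟩ x hx hx'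
  -- a common vertex of two paths is a common end, and the tails omit the first end
  have hfst : ∀ {e : H.Dart}, S.embed e.fst ∉ (S.path e.adj).support.tail := fun {e} => by
    have := (S.isPath e.adj).support_nodup
    rw [← Walk.cons_tail_support] at this
    exact (List.nodup_cons.1 this).1
  obtain ⟨c, hc, hc', rfl⟩ := S.exists_embed_eq_of_mem_support_inter hne
    (List.mem_of_mem_tail hx) (List.mem_of_mem_tail hx')
  rcases hc with rfl | rfl
  · exact hfst hx
  rcases hc' with h | h
  · exact hfst (h ▸ hx')
  · exact hsnd h

lemma odd_forwardCount_path_symm_iff (o : GraphOrientation G) {a b : W} (h : H.Adj a b) :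
    Odd (forwardCount o (S.path h.symm)) ↔ ¬ Odd (forwardCount o (S.path h)) := by
  have hodd := S.odd_length h
  rw [← forwardCount_add_forwardCount_reverse o, ← S.path_symm, Nat.odd_add'] at hodd
  rw [hodd, Nat.not_odd_iff_even]

def orientation (o : GraphOrientation G) : GraphOrientation H where
  dir a b := ∃ h : H.Adj a b, Odd (forwardCount o (S.path h))
  asymm _ _ := fun ⟨h, hab⟩ ⟨_, hba⟩ => (S.odd_forwardCount_path_symm_iff o h).1 hba hab
  adj_iff a b := by
    refine ⟨fun h => ?_, ?_⟩
    · by_cases hab : Odd (forwardCount o (S.path h))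
      · exact .inl ⟨h, hab⟩
      · exact .inr ⟨h.symm, (S.odd_forwardCount_path_symm_iff o h).2 hab⟩
    · rintro (⟨h, -⟩ | ⟨h, -⟩)
      exacts [h, h.symm]

lemma orientation_dir_iff (o : GraphOrientation G) {a b : W} (h : H.Adj a b) :
    (S.orientation o).dir a b ↔ Odd (forwardCount o (S.path h)) :=
  ⟨fun ⟨_, h'⟩ => h', fun h' => ⟨h, h'⟩⟩

lemma odd_forwardCount_walk_iff (o : GraphOrientation G) {a b : W} (w : H.Walk a b) :
    Odd (forwardCount o (S.walk w)) ↔ Odd (forwardCount (S.orientation o) w) := by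
  classical
  induction w with
  | nil => simp [forwardCount_nil]
  | cons h w ih =>
    rw [walk_cons, forwardCount_append, forwardCount_cons, Nat.odd_add, Nat.odd_add', ← ih,
      ← Nat.not_odd_iff_even, ← Nat.not_odd_iff_even, S.orientation_dir_iff o h]
    split_ifs with hP
    · simp only [hP, odd_one, not_true_eq_false, iff_false, true_iff]
    · simp only [hP, Nat.not_odd_zero, not_false_eq_true, iff_true, false_iff, not_not]

lemma mem_verts_of_mem_support_walk {a b : W} {w : H.Walk a b} {x : V}
    (hx : x ∈ (S.walk w).support) : x ∈ S.verts := by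
  rcases (S.mem_support_walk_iff w).1 hx with rfl | ⟨d, -, hx⟩
  · exact .inl ⟨a, rfl⟩
  · exact S.mem_verts_of_mem_support d.adj hx

lemma embed_mem_support_walk {a b c : W} {w : H.Walk a b} (hc : c ∈ w.support) :
    S.embed c ∈ (S.walk w).support := by
  rw [← Walk.cons_tail_support, ← Walk.map_snd_darts, List.mem_cons, List.mem_map] at hc
  rcases hc with rfl | ⟨d, hd, rfl⟩
  · exact (S.mem_support_walk_iff w).2 (.inl rfl)
  · exact (S.mem_support_walk_iff w).2 (.inr ⟨d, hd, (S.path d.adj).end_mem_support⟩)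

lemma mem_support_walk_of_edge_mem {a b : W} {w : H.Walk a b} {d : H.Dart}
    (hd : d.edge ∈ w.edges) {x : V} (hx : x ∈ (S.path d.adj).support) :
    x ∈ (S.walk w).support := by
  obtain ⟨d', hd', he⟩ := List.mem_map.1 hd
  rcases (dart_edge_eq_iff d' d).1 he with rfl | rfl
  · exact (S.mem_support_walk_iff w).2 (.inr ⟨d', hd', hx⟩)
  · exact (S.mem_support_walk_iff w).2 (.inr ⟨_, hd', (S.mem_support_path_symm_iff d.adj).2 hx⟩)

lemma exists_embed_eq_of_mem_support_walk {a b : W} {w : H.Walk a b} {d : H.Dart}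
    (hd : d.edge ∉ w.edges) {x : V} (hxw : x ∈ (S.walk w).support)
    (hx : x ∈ (S.path d.adj).support) :
    ∃ c ∈ w.support, (c = d.fst ∨ c = d.snd) ∧ S.embed c = x := by
  rcases (S.mem_support_walk_iff w).1 hxw with rfl | ⟨d', hd', hx'⟩
  · exact ⟨a, w.start_mem_support, S.eq_or_eq_of_embed_mem_support d.adj a hx, rfl⟩
  · have hne : d.edge ≠ d'.edge := fun h => hd (h ▸ List.mem_map_of_mem hd')
    obtain ⟨c, hc, hc', rfl⟩ := S.exists_embed_eq_of_mem_support_inter hne hx hx'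
    refine ⟨c, ?_, hc, rfl⟩
    rcases hc' with rfl | rfl
    exacts [w.dart_fst_mem_support_of_mem_darts hd', w.dart_snd_mem_support_of_mem_darts hd']

open scoped Classical in
noncomputable def pathMatching (M : H.Subgraph) (d : H.Dart) : G.Subgraph :=
  (S.path d.adj).altMatching (if M.Adj d.fst d.snd then 0 else 1)

variable {M : H.Subgraph}

lemma isMatching_pathMatching (d : H.Dart) : (S.pathMatching M d).IsMatching :=
  (S.isPath d.adj).isMatching_altMatching _

open scoped Classical in
lemma pathMatching_symm (d : H.Dart) : S.pathMatching M d.symm = S.pathMatching M d := by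
  rw [pathMatching, pathMatching, ← Walk.altMatching_reverse (S.odd_length d.adj), ← S.path_symm]
  exact congrArg _ (if_congr (M.adj_comm _ _) rfl rfl)

lemma adj_of_embed_mem_verts_pathMatching {d : H.Dart} {c : W}
    (hc : S.embed c ∈ (S.pathMatching M d).verts) : M.Adj d.fst d.snd := by
  by_contra hM
  rw [pathMatching, if_neg hM] at hc
  have hends := S.eq_or_eq_of_embed_mem_support d.adj c
    (Walk.mem_support_of_mem_verts_altMatching hc)
  exact (S.isPath d.adj).notMem_verts_altMatching one_pos
    (hends.imp (congrArg S.embed) (congrArg S.embed)) hc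

lemma disjoint_verts_pathMatching (hM : M.IsMatching) {d d' : H.Dart}
    (hne : S.pathMatching M d ≠ S.pathMatching M d') :
    Disjoint (S.pathMatching M d).verts (S.pathMatching M d').verts := by
  refine Set.disjoint_left.2 fun x hx hx' => hne ?_
  by_cases he : d.edge = d'.edge
  · rcases (dart_edge_eq_iff d d').1 he with rfl | rfl
    exacts [rfl, S.pathMatching_symm d']
  · obtain ⟨c, hc, hc', rfl⟩ := S.exists_embed_eq_of_mem_support_inter he
      (Walk.mem_support_of_mem_verts_altMatching hx) (Walk.mem_support_of_mem_verts_altMatching hx')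
    exact absurd (hM.sym2_eq_of_adj_of_adj (S.adj_of_embed_mem_verts_pathMatching hx)
      (S.adj_of_embed_mem_verts_pathMatching hx') hc hc') he

variable {a b : W} {w : H.Walk a b}

lemma notMem_support_walk_of_mem_verts_pathMatching (hMv : M.verts = {c | c ∉ w.support})
    {d : H.Dart} (hd : d.edge ∉ w.edges) {x : V} (hx : x ∈ (S.pathMatching M d).verts) :
    x ∉ (S.walk w).support := by
  intro hxw
  obtain ⟨c, hcw, hc, rfl⟩ := S.exists_embed_eq_of_mem_support_walk hd hxw
    (Walk.mem_support_of_mem_verts_altMatching hx)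
  have hM := S.adj_of_embed_mem_verts_pathMatching hx
  have hfst := hMv ▸ M.edge_vert hM
  have hsnd := hMv ▸ M.edge_vert hM.symm
  rcases hc with rfl | rfl
  exacts [hfst hcw, hsnd hcw]

lemma exists_mem_verts_pathMatching (hM : M.IsMatching) (hMv : M.verts = {c | c ∉ w.support})
    {x : V} (hxS : x ∈ S.verts) (hxw : x ∉ (S.walk w).support) :
    ∃ d : H.Dart, d.edge ∉ w.edges ∧ x ∈ (S.pathMatching M d).verts := by
  have branch : ∀ c, S.embed c ∉ (S.walk w).support →
      ∃ d : H.Dart, d.edge ∉ w.edges ∧ S.embed c ∈ (S.pathMatching M d).verts := by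
    intro c hc
    have hcw : c ∉ w.support := fun h => hc (S.embed_mem_support_walk h)
    obtain ⟨c', hcc', -⟩ := hM (hMv ▸ hcw : c ∈ M.verts)
    refine ⟨⟨(c, c'), M.adj_sub hcc'⟩, fun he => hcw (w.fst_mem_support_of_mem_edges he), ?_⟩
    rw [pathMatching, if_pos hcc']
    simpa using Walk.getVert_mem_verts_altMatching (S.odd_length _) (k := 0) le_rfl (Nat.zero_le _)
  rcases hxS with ⟨c, rfl⟩ | ⟨a', b', h, hx⟩
  · exact branch c hxw
  obtain ⟨k, rfl, hk⟩ := Walk.mem_support_iff_exists_getVert.1 hx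
  by_cases h0 : k = 0
  · subst h0
    simpa using branch a' (by simpa using hxw)
  by_cases hL : k = (S.path h).length
  · subst hL
    simpa using branch b' (by simpa using hxw)
  refine ⟨⟨(a', b'), h⟩, fun he => hxw (S.mem_support_walk_of_edge_mem he hx), ?_⟩
  rw [pathMatching]
  split_ifs <;> exact Walk.getVert_mem_verts_altMatching (S.odd_length h) (by omega) (by omega)

theorem hasPMOn_compl_support_walk (hS : HasPMOn G S.vertsᶜ) (w : H.Walk a b)
    (hw : HasPMOn H {c | c ∉ w.support}) : HasPMOn G {x | x ∉ (S.walk w).support} := by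
  obtain ⟨M₀, hM₀, hM₀v⟩ := hS
  obtain ⟨M, hM, hMv⟩ := hw
  let N : {d : H.Dart // d.edge ∉ w.edges} → G.Subgraph := fun d => S.pathMatching M d
  have hN : (⨆ d, N d).IsMatching :=
    Subgraph.IsMatching.iSup_of_ne_disjoint (fun d => S.isMatching_pathMatching d)
      fun _ _ => S.disjoint_verts_pathMatching hM
  have hNv : (⨆ d, N d).verts ⊆ S.verts := by
    rw [Subgraph.verts_iSup]
    exact Set.iUnion_subset fun d _ hx =>
      S.mem_verts_of_mem_support d.1.adj (Walk.mem_support_of_mem_verts_altMatching hx)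
  refine ⟨M₀ ⊔ ⨆ d, N d, hM₀.sup hN ?_, ?_⟩
  · rw [hM₀.support_eq_verts, hN.support_eq_verts, hM₀v]
    exact disjoint_compl_left.mono_right hNv
  ext x
  simp only [Subgraph.verts_sup, Subgraph.verts_iSup, hM₀v, Set.mem_union, Set.mem_compl_iff,
    Set.mem_iUnion, Set.mem_ofPred_eq]
  constructor
  · rintro (hx | ⟨d, hx⟩)
    · exact fun hxw => hx (S.mem_verts_of_mem_support_walk hxw)
    · exact S.notMem_support_walk_of_mem_verts_pathMatching hMv d.2 hx
  · intro hxw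
    by_cases hxS : x ∈ S.verts
    · obtain ⟨d, hd, hx⟩ := S.exists_mem_verts_pathMatching hM hMv hxS hxw
      exact .inr ⟨⟨d, hd⟩, hx⟩
    · exact .inl hxS

end EvenSubdivision

theorem pfaffian_of_contains_general
    (G : SimpleGraph V) (H : SimpleGraph W)
    (hcon : Contains G H) (hpf : ∃ o : GraphOrientation G, IsPfaffian G o) :
    ∃ o : GraphOrientation H, IsPfaffian H o := by
  obtain ⟨S, hS⟩ := hcon.exists_evenSubdivision
  obtain ⟨o, ho⟩ := hpf
  refine ⟨S.orientation o, fun v c hc heven hcentral => ?_⟩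
  rw [← S.odd_forwardCount_walk_iff]
  exact ho _ (S.walk c) (S.isCycle_walk hc) ((S.even_length_walk_iff c).2 heven)
    (S.hasPMOn_compl_support_walk hS c hcentral)

/-- If a bipartite graph `G` contains a bipartite graph `H` and `G` admits a
Pfaffian orientation, then so does `H`. -/
theorem pfaffian_of_contains [Fintype V] [Fintype W]
    (G : SimpleGraph V) (H : SimpleGraph W)
    (hGbip : ∃ A B, IsBipartition G A B) (hHbip : ∃ A B, IsBipartition H A B)
    (hcon : Contains G H) (hpf : ∃ o : GraphOrientation G, IsPfaffian G o) :
    ∃ o : GraphOrientation H, IsPfaffian H o :=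
  pfaffian_of_contains_general G H hcon hpf
end

section
/- Let M be a matching in a bipartite graph G, and let u, v be vertices of G. If there exists an M-alternating walk in G with ends u and v, then there exists an M-alternating path in G with ends u and v. -/
open SimpleGraph

universe u v

variable {V : Type u} {W : Type v}

/-!
`Walk.bypass` turns a walk into a path by repeatedly cutting out a closed subwalk.
In a bipartite graph every closed walk has even length, and deleting an even number of
consecutive edges from an alternating sequence of edges leaves it alternating with the same
phase. Hence the bypass of an `M`-alternating walk is an `M`-alternating path.
-/

section AltFrom

variable {α : Type*} {S : Set α} {P : Prop}

def AltFrom (S : Set α) (P : Prop) (l : List α) : Prop :=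
  ∀ (i : ℕ) (h : i < l.length), l[i] ∈ S ↔ (Even i ↔ P)

theorem altFrom_cons {a : α} {l : List α} :
    AltFrom S P (a :: l) ↔ (a ∈ S ↔ P) ∧ AltFrom S (¬P) l := by
  constructor
  · intro h
    refine ⟨by simpa using h 0 l.length.succ_pos, fun i hi => ?_⟩
    have := h (i + 1) (by simpa using hi)
    simp only [List.getElem_cons_succ, Nat.even_add_one] at this
    tauto
  · rintro ⟨hhead, htail⟩ (_ | i) hi
    · simpa using hhead
    · have := htail i (by simpa using hi)
      simp only [List.getElem_cons_succ, Nat.even_add_one]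
      tauto

theorem AltFrom.of_append {l₁ l₂ : List α} (h : AltFrom S P (l₁ ++ l₂)) :
    AltFrom S (Even l₁.length ↔ P) l₂ := fun i hi => by
  have := h (l₁.length + i) (by rw [List.length_append]; omega)
  simp only [le_add_iff_nonneg_right, zero_le, List.getElem_append_right, add_tsub_cancel_left,
    Nat.even_add] at this
  tauto

end AltFrom

section Walks

variable {G : SimpleGraph V} {u v : V}

theorem isAltWalk_iff_exists_altFrom (M : G.Subgraph) (w : G.Walk u v) :
    IsAltWalk M w ↔ ∃ P, AltFrom M.edgeSet P w.edges := by
  simp only [IsAltWalk, AltFrom]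
  constructor
  · rintro (h | h)
    · exact ⟨True, by simpa using h⟩
    · exact ⟨False, by simpa [Nat.not_even_iff_odd] using h⟩
  · rintro ⟨P, h⟩
    by_cases hP : P
    · exact .inl (by simpa [hP] using h)
    · exact .inr (by simpa [hP, Nat.not_even_iff_odd] using h)

theorem AltFrom.bypass [DecidableEq V] (hG : G.IsBipartite) {S : Set (Sym2 V)} {P : Prop}
    (p : G.Walk u v) (h : AltFrom S P p.edges) : AltFrom S P p.bypass.edges := by
  induction p generalizing P with
  | nil => exact h
  | @cons u w v hadj p ih =>
    rw [Walk.edges_cons, altFrom_cons] at h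
    have hbyp := ih h.2
    dsimp only [Walk.bypass]
    split_ifs with hu
    · have hodd : ¬Even (p.bypass.takeUntil u hu).length := by
        have := two_colorable_iff_forall_loop_even.1 hG u (.cons hadj (p.bypass.takeUntil u hu))
        rwa [Walk.length_cons, Nat.even_add_one] at this
      rw [← p.bypass.take_spec hu, Walk.edges_append] at hbyp
      simpa [hodd] using hbyp.of_append
    · exact altFrom_cons.2 ⟨h.1, hbyp⟩

end Walks

theorem altWalk_to_altPath_general (G : SimpleGraph V) (A B : Set V)
    (hbip : IsBipartition G A B) (M : G.Subgraph)
    (u v : V) (h : ∃ w : G.Walk u v, IsAltWalk M w) :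
    ∃ p : G.Walk u v, p.IsPath ∧ IsAltWalk M p := by
  classical
  obtain ⟨w, hw⟩ := h
  obtain ⟨P, hP⟩ := (isAltWalk_iff_exists_altFrom M w).1 hw
  have hG : G.IsBipartite := IsBipartiteWith.isBipartite ⟨hbip.1, hbip.2.2⟩
  exact ⟨w.bypass, w.bypass_isPath,
    (isAltWalk_iff_exists_altFrom M _).2 ⟨P, hP.bypass hG w⟩⟩

/-- If there is an `M`-alternating walk with ends `u` and `v`, then there is
an `M`-alternating path with ends `u` and `v`. -/
theorem altWalk_to_altPath [Fintype V] (G : SimpleGraph V) (A B : Set V)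
    (hbip : IsBipartition G A B) (M : G.Subgraph) (hM : M.IsMatching)
    (u v : V) (h : ∃ w : G.Walk u v, IsAltWalk M w) :
    ∃ p : G.Walk u v, p.IsPath ∧ IsAltWalk M p :=
  altWalk_to_altPath_general G A B hbip M u v h
end

section
/- Let G be a brace that has a Pfaffian orientation. Then G has no subgraph isomorphic to K_{2,3}. -/
open SimpleGraph

universe u v

variable {V : Type u} {W : Type v}

/-! Each pair of the three vertices of degree two in a `K₂,₃` spans, with the two vertices of
degree three, a 4-cycle whose complement has a perfect matching by 2-extendability, so a
Pfaffian orientation orients all three 4-cycles oddly. But every edge of the `K₂,₃` lies on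
exactly two of these cycles, traversed in opposite directions, so it agrees with the traversal
exactly once: the three forward counts add up to 6, which is even. -/

namespace SimpleGraph

theorem isCycle_square {G : SimpleGraph V} {a b c d : V}
    (hab : G.Adj a b) (hbc : G.Adj b c) (hcd : G.Adj c d) (hda : G.Adj d a)
    (hac : a ≠ c) (hbd : b ≠ d) :
    (Walk.cons hab (Walk.cons hbc (Walk.cons hcd (Walk.cons hda Walk.nil)))).IsCycle := by
  have := hab.ne; have := hbc.ne; have := hcd.ne; have := hda.ne
  refine ⟨⟨⟨?_⟩, by simp⟩, ?_⟩
  · simp only [Walk.edges_cons, Walk.edges_nil, List.nodup_cons, List.mem_cons, Sym2.eq,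
      Sym2.rel_iff']
    aesop
  · simp only [Walk.support_cons, Walk.support_nil, List.tail_cons, List.nodup_cons,
      List.mem_cons]
    aesop

end SimpleGraph

theorem KExtendable.hasPMOn_compl_of_adj_of_adj {G : SimpleGraph V} (hext : KExtendable G 2)
    {a b c d : V} (hab : G.Adj a b) (hcd : G.Adj c d)
    (hac : a ≠ c) (had : a ≠ d) (hbc : b ≠ c) (hbd : b ≠ d) :
    HasPMOn G ({a, b, c, d} : Set V)ᶜ := by
  have hm₁ := Subgraph.IsMatching.subgraphOfAdj hab
  have hm₂ := Subgraph.IsMatching.subgraphOfAdj hcd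
  have hM : (G.subgraphOfAdj hab ⊔ G.subgraphOfAdj hcd).IsMatching := by
    refine hm₁.sup hm₂ ?_
    rw [hm₁.support_eq_verts, hm₂.support_eq_verts, subgraphOfAdj_verts, subgraphOfAdj_verts]
    simp [hac.symm, had.symm, hbc.symm, hbd.symm]
  have hcard : (G.subgraphOfAdj hab ⊔ G.subgraphOfAdj hcd).edgeSet.ncard ≤ 2 := by
    rw [Subgraph.edgeSet_sup, edgeSet_subgraphOfAdj, edgeSet_subgraphOfAdj]
    exact (Set.ncard_union_le _ _).trans (by simp)
  obtain ⟨P, hle, hP⟩ := hext _ hM hcard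
  have hPab : P.Adj a b := hle.2 (by simp)
  have hPcd : P.Adj c d := hle.2 (by simp)
  refine ⟨P.deleteVerts {a, b, c, d}, ?_, by simp [hP.2.verts_eq_univ, Set.compl_eq_univ_sdiff]⟩
  rintro v ⟨hvP, hvS⟩
  obtain ⟨w, hw, hwu⟩ := hP.1 hvP
  -- the partner of `v` avoids `{a, b, c, d}`, whose vertices are matched among themselves
  have hwS : w ∉ ({a, b, c, d} : Set V) := by
    have hw' := hP.1 (hP.2 w)
    simp only [Set.mem_insert_iff, Set.mem_singleton_iff, not_or] at hvS ⊢
    refine ⟨?_, ?_, ?_, ?_⟩ <;> rintro rfl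
    · exact hvS.2.1 (hw'.unique hw.symm hPab)
    · exact hvS.1 (hw'.unique hw.symm hPab.symm)
    · exact hvS.2.2.2 (hw'.unique hw.symm hPcd)
    · exact hvS.2.2.1 (hw'.unique hw.symm hPcd.symm)
  exact ⟨w, Subgraph.deleteVerts_adj.mpr ⟨hvP, hvS, hP.2 w, hwS, hw⟩,
    fun y hy => hwu y (Subgraph.deleteVerts_adj.mp hy).2.2.2.2⟩

namespace GraphOrientation

variable {G : SimpleGraph V} (o : GraphOrientation G)

open scoped Classical in
noncomputable def agrees (u v : V) : ℕ :=
  if o.dir u v then 1 else 0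

theorem agrees_add_agrees_swap {u v : V} (huv : G.Adj u v) : o.agrees u v + o.agrees v u = 1 := by
  rcases (o.adj_iff u v).mp huv with h | h
  · simp [agrees, h, o.asymm u v h]
  · simp [agrees, h, o.asymm v u h]

theorem forwardCount_square {a b c d : V}
    (hab : G.Adj a b) (hbc : G.Adj b c) (hcd : G.Adj c d) (hda : G.Adj d a) :
    forwardCount o (Walk.cons hab (Walk.cons hbc (Walk.cons hcd (Walk.cons hda Walk.nil)))) =
      o.agrees a b + o.agrees b c + o.agrees c d + o.agrees d a := by
  simp only [forwardCount, agrees, Walk.darts_cons, Walk.darts_nil, List.countP_cons,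
    List.countP_nil]
  split_ifs <;> simp_all

end GraphOrientation

theorem IsPfaffian.odd_square {G : SimpleGraph V} {o : GraphOrientation G} (hpf : IsPfaffian G o)
    (hext : KExtendable G 2) {a b c d : V}
    (hab : G.Adj a b) (hbc : G.Adj b c) (hcd : G.Adj c d) (hda : G.Adj d a)
    (hac : a ≠ c) (hbd : b ≠ d) :
    Odd (o.agrees a b + o.agrees b c + o.agrees c d + o.agrees d a) := by
  have hcentral : HasPMOn G {x | x ∉ [a, b, c, d, a]} := by
    convert hext.hasPMOn_compl_of_adj_of_adj hab hcd hac hda.ne' hbc.ne hbd using 2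
    ext x
    simp only [Set.mem_ofPred_eq, List.mem_cons, List.not_mem_nil, Set.mem_compl_iff,
      Set.mem_insert_iff, Set.mem_singleton_iff]
    tauto
  rw [← o.forwardCount_square hab hbc hcd hda]
  exact hpf a _ (isCycle_square hab hbc hcd hda hac hbd) ⟨2, rfl⟩ hcentral

theorem IsPfaffian.not_K23 {G : SimpleGraph V} {o : GraphOrientation G} (hpf : IsPfaffian G o)
    (hext : KExtendable G 2) {x₁ x₂ y₁ y₂ y₃ : V} (hx : x₁ ≠ x₂)
    (hy₁₂ : y₁ ≠ y₂) (hy₁₃ : y₁ ≠ y₃) (hy₂₃ : y₂ ≠ y₃)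
    (h₁₁ : G.Adj x₁ y₁) (h₁₂ : G.Adj x₁ y₂) (h₁₃ : G.Adj x₁ y₃)
    (h₂₁ : G.Adj x₂ y₁) (h₂₂ : G.Adj x₂ y₂) (h₂₃ : G.Adj x₂ y₃) : False := by
  have c₁₂ := hpf.odd_square hext h₁₁ h₂₁.symm h₂₂ h₁₂.symm hx hy₁₂
  have c₂₃ := hpf.odd_square hext h₁₂ h₂₂.symm h₂₃ h₁₃.symm hx hy₂₃
  have c₃₁ := hpf.odd_square hext h₁₃ h₂₃.symm h₂₁ h₁₁.symm hx hy₁₃.symm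
  have := o.agrees_add_agrees_swap h₁₁; have := o.agrees_add_agrees_swap h₁₂
  have := o.agrees_add_agrees_swap h₁₃; have := o.agrees_add_agrees_swap h₂₁
  have := o.agrees_add_agrees_swap h₂₂; have := o.agrees_add_agrees_swap h₂₃
  rw [Nat.odd_iff] at c₁₂ c₂₃ c₃₁
  omega

theorem no_K23_subgraph_general (G : SimpleGraph V) (hbrace : IsBrace G)
    (hpf : ∃ o : GraphOrientation G, IsPfaffian G o) :
    ¬ ∃ f : (Fin 2 ⊕ Fin 3) → V, Function.Injective f ∧
        ∀ a b, (completeBipartiteGraph (Fin 2) (Fin 3)).Adj a b →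
          G.Adj (f a) (f b) := by
  obtain ⟨o, hpf⟩ := hpf
  rintro ⟨f, hinj, hadj⟩
  have hA (i : Fin 2) (j : Fin 3) : G.Adj (f (.inl i)) (f (.inr j)) := hadj _ _ (by simp)
  exact hpf.not_K23 hbrace.2 (hinj.ne (by simp)) (hinj.ne (by simp)) (hinj.ne (by simp))
    (hinj.ne (by simp)) (hA 0 0) (hA 0 1) (hA 0 2) (hA 1 0) (hA 1 1) (hA 1 2)

/-- A brace with a Pfaffian orientation has no subgraph isomorphic to `K₂,₃`. -/
theorem no_K23_subgraph [Fintype V] (G : SimpleGraph V) (hbrace : IsBrace G)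
    (hpf : ∃ o : GraphOrientation G, IsPfaffian G o) :
    ¬ ∃ f : (Fin 2 ⊕ Fin 3) → V, Function.Injective f ∧
        ∀ a b, (completeBipartiteGraph (Fin 2) (Fin 3)).Adj a b →
          G.Adj (f a) (f b) :=
  no_K23_subgraph_general G hbrace hpf
end
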